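/- arXiv:1209.5591 — 4 statements merged into one kernel-verified Lean document; each statement's English description precedes it below -/
import Mathlib

section
/- The involution of the affine 4-space with coordinates (w,x,y,z) given by w' = (wz−xy)(z−1)/((x−z)(y−z)), x' = (wz−xy)(y−1)/((w−y)(y−z)), y' = (wz−xy)(x−1)/((w−x)(x−z)), z' = (wz−xy)(w−1)/((w−x)(w−y)) is an involution on its domain of definition: applying the map twice returns (w,x,y,z). -/
variable {K : Type*} [Field K]

/-- The rational map `σ(w,x,y,z) = (w',x',y',z')` of affine 4-space given by
`w' = (wz−xy)(z−1)/((x−z)(y−z))`, `x' = (wz−xy)(y−1)/((w−y)(y−z))`,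
`y' = (wz−xy)(x−1)/((w−x)(x−z))`, `z' = (wz−xy)(w−1)/((w−x)(w−y))`. -/
def sigmaMap (p : K × K × K × K) : K × K × K × K :=
  ((p.1 * p.2.2.2 - p.2.1 * p.2.2.1) * (p.2.2.2 - 1) / ((p.2.1 - p.2.2.2) * (p.2.2.1 - p.2.2.2)),
   (p.1 * p.2.2.2 - p.2.1 * p.2.2.1) * (p.2.2.1 - 1) / ((p.1 - p.2.2.1) * (p.2.2.1 - p.2.2.2)),
   (p.1 * p.2.2.2 - p.2.1 * p.2.2.1) * (p.2.1 - 1) / ((p.1 - p.2.1) * (p.2.1 - p.2.2.2)),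
   (p.1 * p.2.2.2 - p.2.1 * p.2.2.1) * (p.1 - 1) / ((p.1 - p.2.1) * (p.1 - p.2.2.1)))

/-- The point `p = (w,x,y,z)` lies in the domain of definition of `σ`: all denominators
are nonzero. -/
def SigmaDom (p : K × K × K × K) : Prop :=
  p.2.1 - p.2.2.2 ≠ 0 ∧ p.2.2.1 - p.2.2.2 ≠ 0 ∧ p.1 - p.2.2.1 ≠ 0 ∧ p.1 - p.2.1 ≠ 0

/-!
Write `D = wz − xy` and `E = (w − 1)(z − 1) − (x − 1)(y − 1)` for the determinants of `p` and
`p − 1`, read as the matrices `[[w, x], [y, z]]`. Over the same denominators, the numerators of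
`σ p` are `D` times the coordinates of `p − 1` in reverse order, and those of `σ p − 1` are `E`
times the coordinates of `p` in reverse order. Hence the denominator factors
`x − z, y − z, w − y, w − x` of `σ p` are those of `p` times the one scalar
`c = DE / ((w − x)(w − y)(x − z)(y − z))`, and `det (σ p) = D c`; substituting this into
`σ (σ p)`, everything cancels.
-/

def det2 (p : K × K × K × K) : K := p.1 * p.2.2.2 - p.2.1 * p.2.2.1

def sigmaDenoms (p : K × K × K × K) : K × K × K × K :=
  (p.2.1 - p.2.2.2, p.2.2.1 - p.2.2.2, p.1 - p.2.2.1, p.1 - p.2.1)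

def sigmaScale (p : K × K × K × K) : K :=
  det2 p * det2 (p - 1) /
    ((p.1 - p.2.1) * (p.1 - p.2.2.1) * (p.2.1 - p.2.2.2) * (p.2.2.1 - p.2.2.2))

section
variable {w x y z : K}

theorem sigmaMap_sub_one (h : SigmaDom (w, x, y, z)) :
    sigmaMap (w, x, y, z) - 1 =
      (det2 ((w, x, y, z) - 1) * z / ((x - z) * (y - z)),
       det2 ((w, x, y, z) - 1) * y / ((w - y) * (y - z)),
       det2 ((w, x, y, z) - 1) * x / ((w - x) * (x - z)),
       det2 ((w, x, y, z) - 1) * w / ((w - x) * (w - y))) := by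
  obtain ⟨hxz, hyz, hwy, hwx⟩ := h
  simp only [sigmaMap, det2, Prod.ext_iff, Prod.fst_sub, Prod.snd_sub, Prod.fst_one,
    Prod.snd_one]
  refine ⟨?_, ?_, ?_, ?_⟩ <;> field_simp <;> ring

theorem det2_sigmaMap (h : SigmaDom (w, x, y, z)) :
    det2 (sigmaMap (w, x, y, z)) = det2 (w, x, y, z) * sigmaScale (w, x, y, z) := by
  obtain ⟨hxz, hyz, hwy, hwx⟩ := h
  simp only [sigmaMap, sigmaScale, det2, Prod.fst_sub, Prod.snd_sub, Prod.fst_one, Prod.snd_one]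
  field_simp

theorem sigmaDenoms_sigmaMap (h : SigmaDom (w, x, y, z)) :
    sigmaDenoms (sigmaMap (w, x, y, z)) = sigmaScale (w, x, y, z) • sigmaDenoms (w, x, y, z) := by
  obtain ⟨hxz, hyz, hwy, hwx⟩ := h
  simp only [sigmaMap, sigmaScale, sigmaDenoms, det2, Prod.smul_mk, smul_eq_mul, Prod.fst_sub,
    Prod.snd_sub, Prod.fst_one, Prod.snd_one, Prod.mk.injEq]
  refine ⟨?_, ?_, ?_, ?_⟩ <;> field_simp <;> ring

theorem sigmaDom_sigmaMap_iff (h : SigmaDom (w, x, y, z)) :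
    SigmaDom (sigmaMap (w, x, y, z)) ↔ det2 (w, x, y, z) ≠ 0 ∧ det2 ((w, x, y, z) - 1) ≠ 0 := by
  have hdenoms := sigmaDenoms_sigmaMap h
  simp only [sigmaDenoms, Prod.smul_mk, smul_eq_mul, Prod.mk.injEq] at hdenoms
  obtain ⟨hxz, hyz, hwy, hwx⟩ := h
  simp [SigmaDom, hdenoms, sigmaScale, hxz, hyz, hwy, hwx]

end

/-- The map `σ` is an involution on its domain of definition: at any point where the
denominators appearing in both applications of the map are nonzero, applying `σ` twice
returns the original point `(w,x,y,z)`. -/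
theorem sigmaMap_involutive (p : K × K × K × K) (h₁ : SigmaDom p) (h₂ : SigmaDom (sigmaMap p)) :
    sigmaMap (sigmaMap p) = p := by
  obtain ⟨w, x, y, z⟩ := p
  obtain ⟨hD, hE⟩ := (sigmaDom_sigmaMap_iff h₁).1 h₂
  have hsub := sigmaMap_sub_one h₁
  have hdet := det2_sigmaMap h₁
  have hdenoms := sigmaDenoms_sigmaMap h₁
  generalize sigmaMap (w, x, y, z) = q at hsub hdet hdenoms
  obtain ⟨w', x', y', z'⟩ := q
  simp only [Prod.ext_iff, Prod.fst_sub, Prod.snd_sub, Prod.fst_one, Prod.snd_one] at hsub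
  simp only [sigmaDenoms, Prod.smul_mk, smul_eq_mul, Prod.mk.injEq] at hdenoms
  obtain ⟨hw', hx', hy', hz'⟩ := hsub
  obtain ⟨hxz', hyz', hwy', hwx'⟩ := hdenoms
  obtain ⟨hxz, hyz, hwy, hwx⟩ := h₁
  simp only [sigmaMap, det2, Prod.mk.injEq] at hdet ⊢
  rw [hdet, hw', hx', hy', hz', hxz', hyz', hwy', hwx']
  simp only [sigmaScale, det2, Prod.fst_sub, Prod.snd_sub, Prod.fst_one, Prod.snd_one] at hD hE ⊢
  refine ⟨?_, ?_, ?_, ?_⟩ <;> field_simp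
end

section
/- Let D be a nonzero rational number that is not a square. If the quadratic field Q(√D) embeds into a number field L that is Galois over Q with cyclic Galois group of order 4, then D > 0 and every prime p ≡ 3 (mod 4) occurs in D with even exponent. -/
/-!
Let `σ` generate `Gal(L/ℚ)` and `α ^ 2 = D`. As `D` is not a square, `σ α = -α`. For
`γ ≠ 0` with `σ² γ = -γ`, the element `v = σ γ / γ` is fixed by `σ²` and satisfies
`σ v * v = -1`, i.e. it is an element of norm `-1` of `ℚ(α)`: writing `v + σ v = s` and
`v - σ v = t α` gives `s² - D t² = -4`. So `D = (s/t)² + (2/t)²` is a sum of two rational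
squares, which forces `D > 0` and even valuations at the primes `p ≡ 3 (mod 4)`.
-/

open Subgroup

theorem even_padicValNat_sq_add_sq {p : ℕ} [Fact p.Prime] (hp : p % 4 = 3) (a b : ℕ) :
    Even (padicValNat p (a ^ 2 + b ^ 2)) := by
  by_cases hmem : p ∈ (a ^ 2 + b ^ 2).primeFactors
  · exact Nat.eq_sq_add_sq_iff.mp ⟨a, b, rfl⟩ p hmem hp
  · rw [← Nat.factorization_def _ Fact.out, Finsupp.notMem_support_iff.mp (by simpa using hmem)]
    exact .zero

theorem even_padicValRat_sq_add_sq {p : ℕ} [Fact p.Prime] (hp : p % 4 = 3) (x y : ℚ) :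
    Even (padicValRat p (x ^ 2 + y ^ 2)) := by
  set n := (x.num * y.den).natAbs ^ 2 + (y.num * x.den).natAbs ^ 2
  have hxy : x ^ 2 + y ^ 2 = (n : ℚ) / ((x.den * y.den : ℕ) : ℚ) ^ 2 := by
    rw [eq_div_iff (by positivity)]
    push_cast [n, Nat.cast_natAbs, sq_abs]
    nth_rewrite 1 [← Rat.num_div_den x, ← Rat.num_div_den y]
    field_simp
  by_cases hn : n = 0
  · simp [hxy, hn]
  rw [hxy, padicValRat.div (by exact_mod_cast hn) (by positivity), padicValRat.pow,
    padicValRat.of_nat]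
  exact (even_padicValNat_sq_add_sq hp _ _).natCast.sub (even_two_mul _)

theorem AlgEquiv.exists_apply_mul_self_eq_neg_one {K L : Type*} [Field K] [Field L] [Algebra K L]
    {σ : L ≃ₐ[K] L} (hσ : orderOf σ = 4) : ∃ v : L, σ v * v = -1 ∧ σ (σ v) = v := by
  have hσσ (x : L) : σ (σ x) = (σ ^ 2) x := rfl
  obtain ⟨x, hx⟩ : ∃ x, (σ ^ 2) x ≠ x := by
    by_contra! h
    exact pow_ne_one_of_lt_orderOf two_ne_zero (by omega) (AlgEquiv.ext h)
  set γ := x - (σ ^ 2) x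
  have hγ : γ ≠ 0 := sub_ne_zero.mpr hx.symm
  have hσσγ : σ (σ γ) = -γ := by
    have : (σ ^ 2) ((σ ^ 2) x) = x := by
      rw [← AlgEquiv.mul_apply, ← pow_add, show 2 + 2 = orderOf σ by omega, pow_orderOf_eq_one]
      rfl
    rw [hσσ, map_sub, this, neg_sub]
  have hσγ : σ γ ≠ 0 := (map_ne_zero σ).mpr hγ
  refine ⟨σ γ / γ, ?_, ?_⟩
  · rw [map_div₀, hσσγ, div_mul_div_cancel₀ hσγ, neg_div_self hγ]
  · rw [map_div₀, map_div₀, hσσγ, map_neg, neg_div_neg_eq]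

theorem IsGalois.mem_range_algebraMap_of_apply_eq_self {K L : Type*} [Field K] [Field L]
    [Algebra K L] [IsGalois K L] {σ : Gal(L/K)} (hσ : ∀ g, g ∈ zpowers σ) {x : L}
    (hx : σ x = x) :
    x ∈ Set.range (algebraMap K L) :=
  (InfiniteGalois.mem_range_algebraMap_iff_fixed x).mpr fun g =>
    (zpowers_le (H := MulAction.stabilizer _ x)).mpr hx (hσ g)

theorem exists_sq_sub_mul_sq_eq_neg_four {K L : Type*} [Field K] [Field L] [Algebra K L]
    [IsGalois K L] {σ : Gal(L/K)} (hσ : ∀ g, g ∈ zpowers σ) (hord : orderOf σ = 4) {D : K}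
    (hD : ¬IsSquare D) {α : L} (hα : α ^ 2 = algebraMap K L D) :
    ∃ s t : K, s ^ 2 - D * t ^ 2 = -4 := by
  have hα0 : α ≠ 0 := by
    rintro rfl
    exact hD ⟨0, by simpa using hα.symm⟩
  have hσα : σ α = -α := by
    have : σ α ^ 2 = α ^ 2 := by rw [← map_pow, hα, AlgEquiv.commutes]
    refine (sq_eq_sq_iff_eq_or_eq_neg.mp this).resolve_left fun hfix => hD ?_
    obtain ⟨r, rfl⟩ := IsGalois.mem_range_algebraMap_of_apply_eq_self hσ hfix
    exact ⟨r, (algebraMap K L).injective (by rw [← hα, map_mul, sq])⟩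
  obtain ⟨v, hv, hσσv⟩ := AlgEquiv.exists_apply_mul_self_eq_neg_one hord
  obtain ⟨s, hs⟩ := IsGalois.mem_range_algebraMap_of_apply_eq_self hσ (x := v + σ v)
    (by rw [map_add, hσσv, add_comm])
  obtain ⟨t, ht⟩ := IsGalois.mem_range_algebraMap_of_apply_eq_self hσ (x := (v - σ v) / α)
    (by rw [map_div₀, map_sub, hσσv, hσα, div_neg, ← neg_div, neg_sub])
  refine ⟨s, t, (algebraMap K L).injective ?_⟩
  have htα : algebraMap K L t * α = v - σ v := by rw [ht, div_mul_cancel₀ _ hα0]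
  rw [map_sub, map_mul, map_pow, map_pow, hs, ← hα, map_neg, map_ofNat]
  linear_combination -(algebraMap K L t * α + (v - σ v)) * htα + 4 * hv

theorem quadratic_in_cyclic_quartic_general {D : ℚ} (hD0 : D ≠ 0) (hDsq : ¬IsSquare D)
    (L : Type*) [Field L] [Algebra ℚ L] [IsGalois ℚ L]
    [IsCyclic (L ≃ₐ[ℚ] L)] (hcard : Nat.card (L ≃ₐ[ℚ] L) = 4)
    (hembed : ∃ α : L, α ^ 2 = (D : L)) :
    0 < D ∧ ∀ p : ℕ, p.Prime → p % 4 = 3 → Even (padicValRat p D) := by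
  obtain ⟨α, hα⟩ := hembed
  obtain ⟨σ, hσ⟩ := IsCyclic.exists_generator (α := L ≃ₐ[ℚ] L)
  have hord : orderOf σ = 4 := hcard ▸ orderOf_eq_card_of_forall_mem_zpowers hσ
  obtain ⟨s, t, hst⟩ :=
    exists_sq_sub_mul_sq_eq_neg_four hσ hord hDsq (α := α) (by rw [hα, eq_ratCast])
  have ht : t ≠ 0 := by
    rintro rfl
    nlinarith [sq_nonneg s]
  have hD : D = (s / t) ^ 2 + (2 / t) ^ 2 := by
    field_simp
    linear_combination -hst
  refine ⟨lt_of_le_of_ne (hD ▸ by positivity) hD0.symm, fun p hp hp4 => ?_⟩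
  have : Fact p.Prime := ⟨hp⟩
  exact hD ▸ even_padicValRat_sq_add_sq hp4 _ _

/-- If `D` is a nonzero non-square rational number and `ℚ(√D)` embeds into a number field
`L` that is Galois over `ℚ` with cyclic Galois group of order `4` (equivalently, `D` becomes
a square in `L`), then `D > 0` and every prime `p ≡ 3 (mod 4)` occurs in `D` with even
exponent. -/
theorem quadratic_in_cyclic_quartic {D : ℚ} (hD0 : D ≠ 0) (hDsq : ¬IsSquare D)
    (L : Type*) [Field L] [NumberField L] [Algebra ℚ L] [IsGalois ℚ L]
    [IsCyclic (L ≃ₐ[ℚ] L)] (hcard : Nat.card (L ≃ₐ[ℚ] L) = 4)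
    (hembed : ∃ α : L, α ^ 2 = (D : L)) :
    0 < D ∧ ∀ p : ℕ, p.Prime → p % 4 = 3 → Even (padicValRat p D) :=
  quadratic_in_cyclic_quartic_general hD0 hDsq L hcard hembed
end

section
/- Let D be a nonzero rational number that is not a square, and suppose Q(√D) embeds into a number field L that is Galois over Q with cyclic Galois group of order 8. Then D > 0, every prime p ≡ 3 (mod 4) occurs in D with even exponent, and every prime p ≡ 5 (mod 8) occurs in D with even exponent. -/
/-!
Let `σ` generate `Gal(L/ℚ) ≅ ℤ/8`. Then `K = ℚ(√D)` is the fixed field of `σ²`, and the fixed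
field `M` of `σ⁴` is `K(β)` with `β² = r ∈ K` and `N_{K/ℚ}(r) ∈ D·ℚ²`. If `σ⁴δ = -δ`, then
`S = σδ/δ ∈ M` has `N_{M/ℚ}(S) = σ⁴δ/δ = -1`, so `u = N_{M/K}(S) = s² - t²r` has `N_{K/ℚ}(u) = -1`,
which already forces `D > 0`.

If `p` is an odd prime with `v_p(D)` odd, then `p` ramifies in `K` and `|N(·)|_p` is an absolute
value on `K` taking even powers of `p` on `s²` and odd ones on `t²r`. As `|N u|_p = 1`, `s` is a
unit and `t²r` lies in the prime above `p`, whose residue field is `𝔽_p`. Reducing, `u ≡ s²` and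
`u² ≡ -1`, so `s` has order `8` in `𝔽_p^×` and `p ≡ 1 (mod 8)`.
-/

open QuadraticAlgebra

theorem ZMod.mod_eight_eq_one_of_pow_four_eq_neg_one {p : ℕ} [hp : Fact p.Prime] (hp2 : p ≠ 2)
    {a : ZMod p} (ha : a ^ 4 = -1) : p % 8 = 1 := by
  have : Fact (2 < p) := ⟨hp.out.two_le.lt_of_ne' hp2⟩
  have ha0 : a ≠ 0 := by rintro rfl; simp at ha
  have hord : orderOf a = 2 ^ 3 :=
    orderOf_eq_prime_pow (by norm_num [ha, ZMod.neg_one_ne_one])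
      (by rw [show 2 ^ (3 : ℕ) = 4 * 2 by rfl, pow_mul, ha, neg_one_sq])
  have hdvd := ZMod.orderOf_dvd_card_sub_one ha0
  rw [hord] at hdvd
  have := hp.out.two_le
  omega

section PadicNorm

variable {p : ℕ} [Fact p.Prime]

theorem mod_eight_eq_one_of_padicNorm_pow_four_add_one_lt_one (hp2 : p ≠ 2) {x : ℚ}
    (hx : padicNorm p (x ^ 4 + 1) < 1) : p % 8 = 1 := by
  have hx1 : padicNorm p x ≤ 1 := by
    by_contra! h
    have h4 : padicNorm p 1 < padicNorm p (x ^ 4) := by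
      rw [padicNorm.one, IsAbsoluteValue.abv_pow (padicNorm p)]
      exact one_lt_pow₀ h (by norm_num)
    rw [padicNorm.add_eq_max_of_ne h4.ne', max_eq_left h4.le, ← padicNorm.one (p := p)] at hx
    exact hx.not_gt h4
  let y : ℤ_[p] := ⟨x, by simpa using (Rat.cast_le (K := ℝ)).mpr hx1⟩
  have hy : PadicInt.toZMod (y ^ 4 + 1) = 0 := by
    rw [← RingHom.mem_ker, PadicInt.ker_toZMod, IsLocalRing.mem_maximalIdeal,
      PadicInt.mem_nonunits, PadicInt.norm_def, PadicInt.coe_add, PadicInt.coe_pow,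
      PadicInt.coe_one]
    have : ‖((x ^ 4 + 1 : ℚ) : ℚ_[p])‖ < 1 := by rw [Padic.eq_padicNorm]; exact_mod_cast hx
    exact_mod_cast this
  rw [map_add, map_pow, map_one] at hy
  exact ZMod.mod_eight_eq_one_of_pow_four_eq_neg_one hp2 (eq_neg_of_add_eq_zero_left hy)

theorem padicNorm_pow_four_add_one_lt_one {m x : ℚ} (hm : padicNorm p (m ^ 2 + 1) < 1)
    (hmx : padicNorm p (m - x ^ 2) < 1) : padicNorm p (x ^ 4 + 1) < 1 := by
  have hm1 : padicNorm p m ≤ 1 := by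
    have : padicNorm p (m ^ 2 + 1 - 1) ≤ 1 := padicNorm.sub.trans (max_le hm.le padicNorm.one.le)
    rwa [add_sub_cancel_right, IsAbsoluteValue.abv_pow (padicNorm p),
      pow_le_one_iff_of_nonneg (padicNorm.nonneg _) two_ne_zero] at this
  have hx1 : padicNorm p (x ^ 2) ≤ 1 := by
    have : padicNorm p (m - (m - x ^ 2)) ≤ 1 := padicNorm.sub.trans (max_le hm1 hmx.le)
    rwa [sub_sub_cancel] at this
  calc padicNorm p (x ^ 4 + 1) = padicNorm p ((m ^ 2 + 1) - (m - x ^ 2) * (m + x ^ 2)) := by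
        ring_nf
    _ ≤ max (padicNorm p (m ^ 2 + 1)) (padicNorm p ((m - x ^ 2) * (m + x ^ 2))) := padicNorm.sub
    _ < 1 := by
      refine max_lt hm ?_
      rw [padicNorm.mul]
      exact mul_lt_one_of_nonneg_of_lt_one_left (padicNorm.nonneg _) hmx
        (padicNorm.nonarchimedean.trans (max_le hm1 hx1))

theorem padicNorm_add_sq_le (a b : ℚ) :
    padicNorm p ((a + b) ^ 2) ≤ max (padicNorm p (a ^ 2)) (padicNorm p (b ^ 2)) := by
  simp only [IsAbsoluteValue.abv_pow (padicNorm p)]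
  rw [← (pow_left_monotoneOn (M₀ := ℚ)).map_max (padicNorm.nonneg a) (padicNorm.nonneg b)]
  exact pow_le_pow_left₀ (padicNorm.nonneg _) padicNorm.nonarchimedean 2

variable {D : ℚ}

theorem padicNorm_sq_eq_padicNorm_mul_sq_iff (hD : Odd (padicValRat p D)) {a b : ℚ} :
    padicNorm p (a ^ 2) = padicNorm p (D * b ^ 2) ↔ a = 0 ∧ b = 0 := by
  have hD0 : D ≠ 0 := by rintro rfl; simp at hD
  refine ⟨fun h => ?_, by rintro ⟨rfl, rfl⟩; simp⟩
  rcases eq_or_ne a 0 with rfl | ha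
  · rw [zero_pow two_ne_zero, padicNorm.zero, eq_comm] at h
    simpa [hD0] using padicNorm.zero_of_padicNorm_eq_zero h
  rcases eq_or_ne b 0 with rfl | hb
  · rw [zero_pow two_ne_zero, mul_zero, padicNorm.zero] at h
    exact absurd (padicNorm.zero_of_padicNorm_eq_zero h) (pow_ne_zero 2 ha)
  rw [padicNorm.eq_zpow_of_nonzero (pow_ne_zero 2 ha),
    padicNorm.eq_zpow_of_nonzero (mul_ne_zero hD0 (pow_ne_zero 2 hb))] at h
  have hp : (1 : ℚ) < p := mod_cast (Fact.out : p.Prime).one_lt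
  have hval := neg_inj.mp (zpow_right_injective₀ (by positivity) hp.ne' h)
  rw [padicValRat.pow, padicValRat.mul hD0 (pow_ne_zero 2 hb), padicValRat.pow] at hval
  obtain ⟨k, hk⟩ := hD
  omega

theorem padicNorm_mul_sq_ne_one (hD : Odd (padicValRat p D)) (b : ℚ) :
    padicNorm p (D * b ^ 2) ≠ 1 := by
  intro h
  rw [← padicNorm.one (p := p), ← one_pow 2, eq_comm,
    padicNorm_sq_eq_padicNorm_mul_sq_iff hD] at h
  exact one_ne_zero h.1

end PadicNorm

section RamifiedNorm

variable {p : ℕ} {D : ℚ}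

variable (p) in
/-- When `padicValRat p D` is odd, `p` ramifies in `ℚ(√D)` and `z ↦ |N z|_p` is an absolute value
on it extending the square of `|·|_p`. -/
noncomputable def ramifiedNorm (z : QuadraticAlgebra ℚ D 0) : ℚ :=
  padicNorm p z.norm

theorem ramifiedNorm_neg (z : QuadraticAlgebra ℚ D 0) : ramifiedNorm p (-z) = ramifiedNorm p z := by
  rw [ramifiedNorm, QuadraticAlgebra.norm_neg, ramifiedNorm]

variable [Fact p.Prime]

theorem ramifiedNorm_mk (hD : Odd (padicValRat p D)) (a b : ℚ) :
    ramifiedNorm p (⟨a, b⟩ : QuadraticAlgebra ℚ D 0) =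
      max (padicNorm p (a ^ 2)) (padicNorm p (D * b ^ 2)) := by
  rw [ramifiedNorm, norm_def, show a * a + 0 * a * b - D * b * b = a ^ 2 + -(D * b ^ 2) by ring]
  by_cases hab : a = 0 ∧ b = 0
  · obtain ⟨rfl, rfl⟩ := hab
    simp
  rw [padicNorm.add_eq_max_of_ne, padicNorm.neg]
  rwa [padicNorm.neg, Ne, padicNorm_sq_eq_padicNorm_mul_sq_iff hD]

theorem isNonarchimedean_ramifiedNorm (hD : Odd (padicValRat p D)) :
    IsNonarchimedean (ramifiedNorm p : QuadraticAlgebra ℚ D 0 → ℚ) := by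
  rintro ⟨a, b⟩ ⟨a', b'⟩
  rw [show (⟨a, b⟩ + ⟨a', b'⟩ : QuadraticAlgebra ℚ D 0) = ⟨a + a', b + b'⟩ from rfl,
    ramifiedNorm_mk hD, ramifiedNorm_mk hD, ramifiedNorm_mk hD]
  have hD : padicNorm p (D * (b + b') ^ 2) ≤
      max (padicNorm p (D * b ^ 2)) (padicNorm p (D * b' ^ 2)) := by
    simp only [padicNorm.mul]
    rw [← mul_max_of_nonneg _ _ (padicNorm.nonneg D)]
    exact mul_le_mul_of_nonneg_left (padicNorm_add_sq_le b b') (padicNorm.nonneg D)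
  exact max_le ((padicNorm_add_sq_le a a').trans (max_le_max (le_max_left _ _) (le_max_left _ _)))
    (hD.trans (max_le_max (le_max_right _ _) (le_max_right _ _)))

theorem ramifiedNorm_add_eq_max_of_ne (hD : Odd (padicValRat p D)) {z w : QuadraticAlgebra ℚ D 0}
    (h : ramifiedNorm p z ≠ ramifiedNorm p w) :
    ramifiedNorm p (z + w) = max (ramifiedNorm p z) (ramifiedNorm p w) :=
  IsNonarchimedean.add_eq_max_of_ne' _ (isNonarchimedean_ramifiedNorm hD)
    (fun z => (ramifiedNorm_neg z).symm) h

theorem padicNorm_sq_re_le_ramifiedNorm (hD : Odd (padicValRat p D)) (z : QuadraticAlgebra ℚ D 0) :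
    padicNorm p (z.re ^ 2) ≤ ramifiedNorm p z :=
  (le_max_left _ _).trans_eq (ramifiedNorm_mk hD z.re z.im).symm

theorem padicNorm_mul_sq_im_lt_one (hD : Odd (padicValRat p D)) {z : QuadraticAlgebra ℚ D 0}
    (hz : ramifiedNorm p z ≤ 1) : padicNorm p (D * z.im ^ 2) < 1 :=
  lt_of_le_of_ne (((le_max_right _ _).trans_eq (ramifiedNorm_mk hD z.re z.im).symm).trans hz)
    (padicNorm_mul_sq_ne_one hD z.im)

theorem ramifiedNorm_sq_eq_one_and_lt_one (hD : Odd (padicValRat p D))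
    {r s t : QuadraticAlgebra ℚ D 0} (hr : ∃ v, r.norm = D * v ^ 2)
    (h : ramifiedNorm p (s ^ 2 - t ^ 2 * r) = 1) :
    ramifiedNorm p (s ^ 2) = 1 ∧ ramifiedNorm p (t ^ 2 * r) < 1 := by
  obtain ⟨v, hv⟩ := hr
  have hs : ramifiedNorm p (s ^ 2) = padicNorm p (s.norm ^ 2) := by rw [ramifiedNorm, map_pow]
  have hq : ramifiedNorm p (t ^ 2 * r) = padicNorm p (D * (t.norm * v) ^ 2) := by
    rw [ramifiedNorm, map_mul, map_pow, hv]
    ring_nf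
  have hq1 : ramifiedNorm p (t ^ 2 * r) ≠ 1 := hq ▸ padicNorm_mul_sq_ne_one hD _
  have hne : ramifiedNorm p (s ^ 2) ≠ ramifiedNorm p (-(t ^ 2 * r)) := by
    rw [ramifiedNorm_neg, hs, hq, Ne, padicNorm_sq_eq_padicNorm_mul_sq_iff hD]
    rintro ⟨hs0, hq0⟩
    have := isNonarchimedean_ramifiedNorm hD (s ^ 2) (-(t ^ 2 * r))
    rw [← sub_eq_add_neg, h, ramifiedNorm_neg, hs, hq, hs0, hq0] at this
    norm_num at this
  rw [sub_eq_add_neg, ramifiedNorm_add_eq_max_of_ne hD hne, ramifiedNorm_neg] at h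
  rcases max_eq_iff.mp h with ⟨hs1, hle⟩ | ⟨hq1', -⟩
  · exact ⟨hs1, lt_of_le_of_ne (hle.trans hs1.le) hq1⟩
  · exact absurd hq1' hq1

theorem mod_eight_eq_one_of_norm_sq_sub_sq_mul_eq_neg_one (hp2 : p ≠ 2)
    (hD : Odd (padicValRat p D)) {r s t : QuadraticAlgebra ℚ D 0} (hr : ∃ v, r.norm = D * v ^ 2)
    (h : (s ^ 2 - t ^ 2 * r).norm = -1) : p % 8 = 1 := by
  set q := t ^ 2 * r
  have hz : ramifiedNorm p (s ^ 2 - q) = 1 := by rw [ramifiedNorm, h, padicNorm.neg, padicNorm.one]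
  obtain ⟨hs, hq⟩ := ramifiedNorm_sq_eq_one_and_lt_one hD hr hz
  have hs1 : ramifiedNorm p s ≤ 1 := by
    rw [ramifiedNorm, map_pow, IsAbsoluteValue.abv_pow (padicNorm p)] at hs
    exact (pow_le_one_iff_of_nonneg (padicNorm.nonneg _) two_ne_zero).mp hs.le
  have hq1 : padicNorm p q.re < 1 := by
    have := (padicNorm_sq_re_le_ramifiedNorm hD q).trans_lt hq
    rwa [IsAbsoluteValue.abv_pow (padicNorm p), pow_lt_one_iff_of_nonneg (padicNorm.nonneg _)
      two_ne_zero] at this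
  set m := (s ^ 2 - q).re
  have hm : padicNorm p (m ^ 2 + 1) < 1 := by
    have : m ^ 2 + 1 = D * (s ^ 2 - q).im ^ 2 := by
      rw [norm_def] at h
      linear_combination h
    exact this ▸ padicNorm_mul_sq_im_lt_one hD hz.le
  have hms : padicNorm p (m - s.re ^ 2) < 1 := by
    have : m - s.re ^ 2 = D * s.im ^ 2 - q.re := by
      simp only [m, sq, re_sub, re_mul]
      ring
    exact this ▸ padicNorm.sub.trans_lt (max_lt (padicNorm_mul_sq_im_lt_one hD hs1) hq1)
  exact mod_eight_eq_one_of_padicNorm_pow_four_add_one_lt_one hp2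
    (padicNorm_pow_four_add_one_lt_one hm hms)

end RamifiedNorm

section Galois

variable {F L : Type*} [Field F] [Field L] [Algebra F L]

theorem mem_range_algebraMap_of_apply_eq [IsGalois F L] [FiniteDimensional F L]
    {σ : L ≃ₐ[F] L} (hσ : ∀ τ, τ ∈ Subgroup.zpowers σ) {z : L} (hz : σ z = z) :
    z ∈ Set.range (algebraMap F L) :=
  (IsGalois.mem_range_algebraMap_iff_fixed z).mpr fun τ =>
    Subgroup.zpowers_le.mpr (show σ ∈ MulAction.stabilizer _ z from hz) (hσ τ)

theorem AlgEquiv.exists_ne_zero_apply_eq_neg {τ : L ≃ₐ[F] L} (hτ : τ * τ = 1) (hτ1 : τ ≠ 1) :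
    ∃ δ ≠ 0, τ δ = -δ := by
  obtain ⟨z, hz⟩ : ∃ z, τ z ≠ z := by
    by_contra! h
    exact hτ1 (AlgEquiv.ext h)
  refine ⟨z - τ z, sub_ne_zero.mpr hz.symm, ?_⟩
  rw [map_sub, ← AlgEquiv.mul_apply, hτ, AlgEquiv.one_apply, neg_sub]

variable {D : F} {α : L}

theorem apply_eq_neg_of_sq_eq {σ : L ≃ₐ[F] L} (hα : α ^ 2 = algebraMap F L D)
    (hαF : σ α ≠ α) : σ α = -α := by
  have hsq : σ α ^ 2 = α ^ 2 := by rw [← map_pow, hα, AlgEquiv.commutes]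
  have h : (σ α - α) * (σ α + α) = 0 := by linear_combination hsq
  exact eq_neg_of_add_eq_zero_left ((mul_eq_zero.mp h).resolve_left (sub_ne_zero.mpr hαF))

variable (D) in
noncomputable def sqrtEmbedding (hα : α ^ 2 = algebraMap F L D) : QuadraticAlgebra F D 0 →ₐ[F] L :=
  QuadraticAlgebra.lift ⟨α, by rw [← sq, hα, Algebra.algebraMap_eq_smul_one, zero_smul, add_zero]⟩

theorem sqrtEmbedding_apply (hα : α ^ 2 = algebraMap F L D) (z : QuadraticAlgebra F D 0) :
    sqrtEmbedding D hα z = algebraMap F L z.re + algebraMap F L z.im * α := by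
  simp [sqrtEmbedding, Algebra.smul_def]

section Conjugation

variable {σ : L ≃ₐ[F] L} (hα : α ^ 2 = algebraMap F L D) (hσα : σ α = -α)
include hσα

theorem apply_sqrtEmbedding (z : QuadraticAlgebra F D 0) :
    σ (sqrtEmbedding D hα z) = sqrtEmbedding D hα (star z) := by
  simp [sqrtEmbedding_apply, hσα]

theorem algebraMap_norm_eq_mul_apply (z : QuadraticAlgebra F D 0) :
    algebraMap F L z.norm = sqrtEmbedding D hα z * σ (sqrtEmbedding D hα z) := by
  rw [apply_sqrtEmbedding hα hσα, ← map_mul, ← algebraMap_norm_eq_mul_star, AlgHom.commutes]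

end Conjugation

section FixedField

variable {σ : L ≃ₐ[F] L} (hfix : ∀ z, σ z = z → z ∈ Set.range (algebraMap F L))
  (hα : α ^ 2 = algebraMap F L D) (hασ : σ α ≠ α)
include hfix hα hασ

theorem exists_sqrtEmbedding_eq_of_sq_apply_eq {z : L} (hz : (σ ^ 2) z = z) :
    ∃ k, sqrtEmbedding D hα k = z := by
  have hσα := apply_eq_neg_of_sq_eq hα hασ
  have hα0 : α ≠ 0 := fun h => hασ (by rw [h, map_zero])
  have h2 : (2 : L) ≠ 0 := fun h => hασ (by rw [hσα]; linear_combination (-α) * h)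
  rw [sq, AlgEquiv.mul_apply] at hz
  obtain ⟨a, ha⟩ := hfix ((z + σ z) / 2) (by rw [map_div₀, map_add, hz, map_ofNat, add_comm])
  obtain ⟨b, hb⟩ := hfix ((z - σ z) / (2 * α)) (by
    rw [map_div₀, map_sub, hz, map_mul, map_ofNat, hσα, mul_neg, div_neg, ← neg_div, neg_sub])
  refine ⟨⟨a, b⟩, ?_⟩
  rw [sqrtEmbedding_apply, ha, hb]
  field_simp
  ring

theorem exists_sqrtEmbedding_eq_sq_and_norm_eq_mul_sq {β : L} (hβ : (σ ^ 2) β = -β) :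
    ∃ r, sqrtEmbedding D hα r = β ^ 2 ∧ ∃ v, r.norm = D * v ^ 2 := by
  have hσα := apply_eq_neg_of_sq_eq hα hασ
  have hα0 : α ≠ 0 := fun h => hασ (by rw [h, map_zero])
  obtain ⟨r, hr⟩ := exists_sqrtEmbedding_eq_of_sq_apply_eq hfix hα hασ
    (show (σ ^ 2) (β ^ 2) = β ^ 2 by rw [map_pow, hβ, neg_sq])
  -- `β σβ` changes sign under `σ`, so it is a multiple of `α`
  obtain ⟨v, hv⟩ := hfix (β * σ β / α) (by
    rw [map_div₀, map_mul, hσα, ← AlgEquiv.mul_apply, ← sq, hβ]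
    ring)
  refine ⟨r, hr, v, (algebraMap F L).injective ?_⟩
  rw [algebraMap_norm_eq_mul_apply hα hσα, hr, map_mul, ← hα, map_pow (algebraMap F L), hv,
    map_pow]
  field_simp

theorem exists_norm_sq_sub_sq_mul_eq_neg_one {δ : L} (hδ0 : δ ≠ 0) (hδ : (σ ^ 4) δ = -δ) :
    ∃ r s t : QuadraticAlgebra F D 0,
      (∃ v, r.norm = D * v ^ 2) ∧ (s ^ 2 - t ^ 2 * r).norm = -1 := by
  have hσα := apply_eq_neg_of_sq_eq hα hασ
  have hpow (m n : ℕ) (x : L) : (σ ^ m) ((σ ^ n) x) = (σ ^ (m + n)) x := by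
    rw [pow_add, AlgEquiv.mul_apply]
  have hσδ0 (n : ℕ) : (σ ^ n) δ ≠ 0 := (map_ne_zero (σ ^ n)).mpr hδ0
  set β := δ * (σ ^ 2) δ
  have hβ : (σ ^ 2) β = -β := by
    simp only [β, map_mul, hpow, hδ]
    ring
  obtain ⟨r, hr, hr_norm⟩ := exists_sqrtEmbedding_eq_sq_and_norm_eq_mul_sq hfix hα hασ hβ
  -- `S σS σ²S σ³S = σ⁴δ / δ = -1`; writing `S = s + tβ` over `F(α)`, `u = S σ²S = s² - t²β²`
  set S := σ δ / δ
  have hS (n : ℕ) : (σ ^ n) S = (σ ^ (n + 1)) δ / (σ ^ n) δ := by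
    rw [map_div₀, ← AlgEquiv.mul_apply, ← pow_succ]
  have hS4 : (σ ^ 4) S = S := by
    rw [hS, pow_succ', AlgEquiv.mul_apply, hδ, map_neg, neg_div_neg_eq]
  obtain ⟨s, hs⟩ := exists_sqrtEmbedding_eq_of_sq_apply_eq hfix hα hασ
    (z := (S + (σ ^ 2) S) / 2) (by rw [map_div₀, map_add, hpow, hS4, map_ofNat, add_comm])
  obtain ⟨t, ht⟩ := exists_sqrtEmbedding_eq_of_sq_apply_eq hfix hα hασ
    (z := (S - (σ ^ 2) S) / (2 * β)) (by
      rw [map_div₀, map_sub, hpow, hS4, map_mul, map_ofNat, hβ, mul_neg, div_neg, ← neg_div,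
        neg_sub])
  refine ⟨r, s, t, hr_norm, (algebraMap F L).injective ?_⟩
  have h2 : (2 : L) ≠ 0 := fun h => hασ (by rw [hσα]; linear_combination (-α) * h)
  have hu : sqrtEmbedding D hα (s ^ 2 - t ^ 2 * r) = S * (σ ^ 2) S := by
    rw [map_sub, map_mul, map_pow, map_pow, hs, ht, hr]
    have hβ0 : β ≠ 0 := mul_ne_zero hδ0 (hσδ0 2)
    field_simp
    ring
  rw [algebraMap_norm_eq_mul_apply hα hσα, hu, map_neg, map_one, map_mul, ← AlgEquiv.mul_apply σ,
    ← pow_succ']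
  have hσS : σ S = (σ ^ 2) δ / σ δ := by rw [map_div₀, ← AlgEquiv.mul_apply, ← sq]
  rw [hσS, hS, hS, hδ]
  field_simp [hσδ0, (map_ne_zero σ).mpr hδ0]
  rw [div_mul_cancel₀ _ hδ0]

end FixedField

end Galois

theorem QuadraticAlgebra.pos_of_norm_eq_neg_one {R : Type*} [CommRing R] [LinearOrder R]
    [IsStrictOrderedRing R] {a : R} {z : QuadraticAlgebra R a 0} (h : z.norm = -1) : 0 < a := by
  rw [norm_def] at h
  by_contra! ha
  nlinarith [mul_self_nonneg z.re, mul_nonneg (neg_nonneg.mpr ha) (mul_self_nonneg z.im)]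

theorem quadratic_in_cyclic_octic_general {D : ℚ} (hDsq : ¬IsSquare D)
    (L : Type*) [Field L] [NumberField L] [Algebra ℚ L] [IsGalois ℚ L]
    [IsCyclic (L ≃ₐ[ℚ] L)] (hcard : Nat.card (L ≃ₐ[ℚ] L) = 8)
    (hembed : ∃ α : L, α ^ 2 = (D : L)) :
    0 < D ∧ (∀ p : ℕ, p.Prime → p % 4 = 3 → Even (padicValRat p D)) ∧
      (∀ p : ℕ, p.Prime → p % 8 = 5 → Even (padicValRat p D)) := by
  obtain ⟨σ, hσ⟩ := IsCyclic.exists_generator (α := L ≃ₐ[ℚ] L)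
  have horder : orderOf σ = 8 := by rw [orderOf_eq_card_of_forall_mem_zpowers hσ, hcard]
  have hfix (z : L) : σ z = z → z ∈ Set.range (algebraMap ℚ L) :=
    mem_range_algebraMap_of_apply_eq hσ
  obtain ⟨α, hα⟩ := hembed
  rw [← eq_ratCast (algebraMap ℚ L)] at hα
  have hασ : σ α ≠ α := fun h => by
    obtain ⟨q, hq⟩ := hfix α h
    exact hDsq ⟨q, (algebraMap ℚ L).injective (by rw [← hα, ← hq, map_mul, sq])⟩
  obtain ⟨δ, hδ0, hδ⟩ := AlgEquiv.exists_ne_zero_apply_eq_neg (τ := σ ^ 4)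
    (by rw [← pow_add, show 4 + 4 = orderOf σ by omega, pow_orderOf_eq_one])
    (pow_ne_one_of_lt_orderOf (by norm_num) (by omega))
  obtain ⟨r, s, t, hr, hz⟩ := exists_norm_sq_sub_sq_mul_eq_neg_one hfix hα hασ hδ0 hδ
  have hmod (p : ℕ) (hp : p.Prime) (hp2 : p ≠ 2) : Even (padicValRat p D) ∨ p % 8 = 1 := by
    have := Fact.mk hp
    rw [← Int.not_odd_iff_even, or_iff_not_imp_left, not_not]
    exact fun hD => mod_eight_eq_one_of_norm_sq_sub_sq_mul_eq_neg_one hp2 hD hr hz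
  refine ⟨pos_of_norm_eq_neg_one hz, fun p hp hp4 => ?_, fun p hp hp8 => ?_⟩
  · exact (hmod p hp (by omega)).resolve_right (by omega)
  · exact (hmod p hp (by omega)).resolve_right (by omega)

/-- If `D` is a nonzero non-square rational number and `ℚ(√D)` embeds into a number field
`L` that is Galois over `ℚ` with cyclic Galois group of order `8` (equivalently, `D` becomes
a square in `L`), then `D > 0`, every prime `p ≡ 3 (mod 4)` occurs in `D` with even
exponent, and every prime `p ≡ 5 (mod 8)` occurs in `D` with even exponent. -/
theorem quadratic_in_cyclic_octic {D : ℚ} (hD0 : D ≠ 0) (hDsq : ¬IsSquare D)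
    (L : Type*) [Field L] [NumberField L] [Algebra ℚ L] [IsGalois ℚ L]
    [IsCyclic (L ≃ₐ[ℚ] L)] (hcard : Nat.card (L ≃ₐ[ℚ] L) = 8)
    (hembed : ∃ α : L, α ^ 2 = (D : L)) :
    0 < D ∧ (∀ p : ℕ, p.Prime → p % 4 = 3 → Even (padicValRat p D)) ∧
      (∀ p : ℕ, p.Prime → p % 8 = 5 → Even (padicValRat p D)) :=
  quadratic_in_cyclic_octic_general hDsq L hcard hembed
end

section
/- If six points p_1,...,p_6 ∈ P^2(K̄) are such that p_1, p_2, p_3, p_4 are distinct points on a common line l and p_5, p_6 ∉ l, then m_{125}^3 · m_{346}^3 ≠ 0 while every irrational invariant γ_{(i1i2i3)(i4i5i6)} = m_{i1i2i3} m_{i4i5i6} d_2 and γ_{(i1i2)(i3i4)(i5i6)} = m_{i1i3i4} m_{i2i3i4} m_{i3i5i6} m_{i4i5i6} m_{i5i1i2} m_{i6i1i2} vanishes. -/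
open Matrix

variable {K : Type*} [Field K] [IsAlgClosed K]

/-- The 3×3 minor `m_{ijk}`: determinant of the matrix with rows `x i`, `x j`, `x k`. -/
def minor3 (x : Fin 6 → Fin 3 → K) (i j k : Fin 6) : K :=
  Matrix.det (Matrix.of ![x i, x j, x k])

/-- The determinant `d₂` of the 6×6 matrix of the degree-2 monomials of the six points. -/
def dTwo (x : Fin 6 → Fin 3 → K) : K :=
  Matrix.det (Matrix.of fun i j =>
    ![x i 0 ^ 2, x i 1 ^ 2, x i 2 ^ 2, x i 0 * x i 1, x i 0 * x i 2, x i 1 * x i 2] j)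

/-- Coble's irrational invariant `γ_{(i₁i₂i₃)(i₄i₅i₆)} = m_{i₁i₂i₃} m_{i₄i₅i₆} d₂`. -/
def gammaTriple (x : Fin 6 → Fin 3 → K) (a b c d e f : Fin 6) : K :=
  minor3 x a b c * minor3 x d e f * dTwo x

/-- Coble's irrational invariant
`γ_{(i₁i₂)(i₃i₄)(i₅i₆)} = m_{i₁i₃i₄} m_{i₂i₃i₄} m_{i₃i₅i₆} m_{i₄i₅i₆} m_{i₅i₁i₂} m_{i₆i₁i₂}`. -/
def gammaPair (x : Fin 6 → Fin 3 → K) (a b c d e f : Fin 6) : K :=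
  minor3 x a c d * minor3 x b c d * minor3 x c e f * minor3 x d e f *
    minor3 x e a b * minor3 x f a b

/-!
Three points of `l` give vanishing minors, since the rows lie in the kernel of `φ ≠ 0`, while two
distinct points of `l` and a point off `l` give a nonzero minor, the third row being outside the
span of the other two. All six points lie on the degenerate conic `φ ψ = 0`, where `ψ ≠ 0` vanishes
on `x 4` and `x 5`; the coefficient vector of this conic is a nonzero kernel vector of the matrix
of `d₂`, so `d₂ = 0`. Finally, among the six minors of `γ_{(i₁i₂)(i₃i₄)(i₅i₆)}` there is always one
avoiding the two positions occupied by `p₅` and `p₆`, i.e. a minor of three points of `l`.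
-/

theorem LinearMap.exists_apply_ne_zero_and_apply_ne_zero {R M N P : Type*} [Semiring R]
    [AddCommMonoid M] [AddCommMonoid N] [AddCommMonoid P] [Module R M] [Module R N] [Module R P]
    {f : M →ₗ[R] N} {g : M →ₗ[R] P} (hf : f ≠ 0) (hg : g ≠ 0) : ∃ v, f v ≠ 0 ∧ g v ≠ 0 := by
  obtain ⟨u, hu⟩ := DFunLike.ne_iff.1 hf
  obtain ⟨w, hw⟩ := DFunLike.ne_iff.1 hg
  by_cases hgu : g u = 0
  · by_cases hfw : f w = 0
    · exact ⟨u + w, by simpa [hfw] using hu, by simpa [hgu] using hw⟩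
    · exact ⟨w, hfw, hw⟩
  · exact ⟨u, hu, hgu⟩

section

variable {F : Type*} [Field F]

theorem exists_ne_zero_forall_apply_eq_zero_of_lt_finrank {V : Type*} [AddCommGroup V]
    [Module F V] [FiniteDimensional F V] {m : ℕ} (v : Fin m → V) (hm : m < Module.finrank F V) :
    ∃ f : V →ₗ[F] F, f ≠ 0 ∧ ∀ i, f (v i) = 0 := by
  have hlt : Submodule.span F (Set.range v) < ⊤ := by
    refine lt_top_iff_ne_top.2 fun h => ?_
    have := finrank_range_le_card (R := F) v
    rw [Set.finrank, h, finrank_top, Fintype.card_fin] at this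
    omega
  obtain ⟨f, hf, hker⟩ := (Submodule.span F (Set.range v)).exists_le_ker_of_lt_top hlt
  exact ⟨f, hf, fun i => hker (Submodule.subset_span ⟨i, rfl⟩)⟩

theorem Matrix.det_eq_zero_of_forall_apply_row_eq_zero {n : Type*} [Fintype n] [DecidableEq n]
    {M : Matrix n n F} {φ : (n → F) →ₗ[F] F} (hφ : φ ≠ 0) (h : ∀ i, φ (M i) = 0) :
    M.det = 0 := by
  by_contra hdet
  have hrows : LinearIndependent F M.row :=
    linearIndependent_rows_iff_isUnit.2 ((isUnit_iff_isUnit_det M).2 (isUnit_iff_ne_zero.2 hdet))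
  exact hφ <| LinearMap.ext_on_range (hrows.span_eq_top_of_card_eq_finrank' (by simp)) h

theorem Matrix.det_of_snoc_ne_zero {n : ℕ} {v : Fin n → Fin (n + 1) → F} {w : Fin (n + 1) → F}
    {φ : (Fin (n + 1) → F) →ₗ[F] F} (hv : LinearIndependent F v) (hφv : ∀ i, φ (v i) = 0)
    (hφw : φ w ≠ 0) : (of (Fin.snoc v w : Fin (n + 1) → Fin (n + 1) → F)).det ≠ 0 := by
  have hw : w ∉ Submodule.span F (Set.range v) := fun hw =>
    hφw (LinearMap.mem_ker.1 (Submodule.span_le.2 (Set.range_subset_iff.2 hφv) hw))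
  have hrows := linearIndependent_finSnoc.2 ⟨hv, hw⟩
  exact ((isUnit_iff_isUnit_det _).1 (linearIndependent_rows_iff_isUnit.1 hrows)).ne_zero

def quadraticMonomials (v : Fin 3 → F) : Fin 6 → F :=
  ![v 0 ^ 2, v 1 ^ 2, v 2 ^ 2, v 0 * v 1, v 0 * v 2, v 1 * v 2]

def quadraticCoeffsOfMul (a b : Fin 3 → F) : Fin 6 → F :=
  ![a 0 * b 0, a 1 * b 1, a 2 * b 2, a 0 * b 1 + a 1 * b 0, a 0 * b 2 + a 2 * b 0,
    a 1 * b 2 + a 2 * b 1]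

theorem quadraticCoeffsOfMul_dotProduct_quadraticMonomials (a b v : Fin 3 → F) :
    quadraticCoeffsOfMul a b ⬝ᵥ quadraticMonomials v = (a ⬝ᵥ v) * (b ⬝ᵥ v) := by
  simp only [quadraticCoeffsOfMul, quadraticMonomials, dotProduct, Fin.sum_univ_six,
    Fin.sum_univ_three, Matrix.cons_val]
  ring

variable {x : Fin 6 → Fin 3 → F}

theorem dTwo_eq_det : dTwo x = (of fun i => quadraticMonomials (x i)).det :=
  rfl

theorem dTwo_eq_zero_of_forall_mul_apply_eq_zero {φ ψ : (Fin 3 → F) →ₗ[F] F} (hφ : φ ≠ 0)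
    (hψ : ψ ≠ 0) (h : ∀ i, φ (x i) * ψ (x i) = 0) : dTwo x = 0 := by
  rw [dTwo_eq_det]
  obtain ⟨v, hφv, hψv⟩ := LinearMap.exists_apply_ne_zero_and_apply_ne_zero hφ hψ
  obtain ⟨a, rfl⟩ := (dotProductEquiv F (Fin 3)).surjective φ
  obtain ⟨b, rfl⟩ := (dotProductEquiv F (Fin 3)).surjective ψ
  let Q := dotProductEquiv F (Fin 6) (quadraticCoeffsOfMul a b)
  have hQ (w : Fin 3 → F) : Q (quadraticMonomials w) = (a ⬝ᵥ w) * (b ⬝ᵥ w) :=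
    quadraticCoeffsOfMul_dotProduct_quadraticMonomials a b w
  refine Matrix.det_eq_zero_of_forall_apply_row_eq_zero (φ := Q) ?_ fun i =>
    (hQ (x i)).trans (h i)
  exact DFunLike.ne_iff.2 ⟨quadraticMonomials v, by simpa [hQ] using mul_ne_zero hφv hψv⟩

theorem minor3_eq_zero_of_apply_eq_zero {φ : (Fin 3 → F) →ₗ[F] F} (hφ : φ ≠ 0) {i j k : Fin 6}
    (hi : φ (x i) = 0) (hj : φ (x j) = 0) (hk : φ (x k) = 0) : minor3 x i j k = 0 :=
  Matrix.det_eq_zero_of_forall_apply_row_eq_zero hφ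
    (Fin.forall_fin_succ.2 ⟨hi, Fin.forall_fin_two.2 ⟨hj, hk⟩⟩)

theorem minor3_ne_zero_of_apply_ne_zero {φ : (Fin 3 → F) →ₗ[F] F} {i j k : Fin 6}
    (hij : LinearIndependent F ![x i, x j]) (hi : φ (x i) = 0) (hj : φ (x j) = 0)
    (hk : φ (x k) ≠ 0) : minor3 x i j k ≠ 0 := by
  have hsnoc : ![x i, x j, x k] = Fin.snoc ![x i, x j] (x k) := by
    ext r : 1
    fin_cases r <;> rfl
  rw [minor3, hsnoc]
  exact Matrix.det_of_snoc_ne_zero hij (Fin.forall_fin_two.2 ⟨hi, hj⟩) hk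

-- The disjuncts are the position triples of the six minors in `gammaPair`.
theorem gammaPair_triple_avoiding (a b : Fin 6) :
    (0 ≠ a ∧ 0 ≠ b ∧ 2 ≠ a ∧ 2 ≠ b ∧ 3 ≠ a ∧ 3 ≠ b) ∨
    (1 ≠ a ∧ 1 ≠ b ∧ 2 ≠ a ∧ 2 ≠ b ∧ 3 ≠ a ∧ 3 ≠ b) ∨
    (2 ≠ a ∧ 2 ≠ b ∧ 4 ≠ a ∧ 4 ≠ b ∧ 5 ≠ a ∧ 5 ≠ b) ∨
    (3 ≠ a ∧ 3 ≠ b ∧ 4 ≠ a ∧ 4 ≠ b ∧ 5 ≠ a ∧ 5 ≠ b) ∨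
    (4 ≠ a ∧ 4 ≠ b ∧ 0 ≠ a ∧ 0 ≠ b ∧ 1 ≠ a ∧ 1 ≠ b) ∨
    (5 ≠ a ∧ 5 ≠ b ∧ 0 ≠ a ∧ 0 ≠ b ∧ 1 ≠ a ∧ 1 ≠ b) := by
  omega

theorem gammaPair_perm_eq_zero (L : Fin 6 → Prop) (u v : Fin 6) (hL : ∀ i, L i ∨ i = u ∨ i = v)
    (hminor : ∀ i j k, L i → L j → L k → minor3 x i j k = 0) (π : Equiv.Perm (Fin 6)) :
    gammaPair x (π 0) (π 1) (π 2) (π 3) (π 4) (π 5) = 0 := by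
  have hLπ (t : Fin 6) (hu : t ≠ π.symm u) (hv : t ≠ π.symm v) : L (π t) :=
    (hL (π t)).resolve_right (by simp [← π.eq_symm_apply, hu, hv])
  rcases gammaPair_triple_avoiding (π.symm u) (π.symm v) with
    ⟨h₁, h₂, h₃, h₄, h₅, h₆⟩ | ⟨h₁, h₂, h₃, h₄, h₅, h₆⟩ | ⟨h₁, h₂, h₃, h₄, h₅, h₆⟩ |
    ⟨h₁, h₂, h₃, h₄, h₅, h₆⟩ | ⟨h₁, h₂, h₃, h₄, h₅, h₆⟩ | ⟨h₁, h₂, h₃, h₄, h₅, h₆⟩ <;>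
  simp [gammaPair, hminor _ _ _ (hLπ _ h₁ h₂) (hLπ _ h₃ h₄) (hLπ _ h₅ h₆)]

end

/-- If the six points `p₁, …, p₆ ∈ ℙ²(K̄)` (with representative vectors `x i`, 0-based) are
such that `p₁, p₂, p₃, p₄` are distinct points on a common line `l` (the kernel of a nonzero
linear functional `φ`) and `p₅, p₆ ∉ l`, then `m₁₂₅³ · m₃₄₆³ ≠ 0` while every irrational
invariant `γ_{(i₁i₂i₃)(i₄i₅i₆)}` and `γ_{(i₁i₂)(i₃i₄)(i₅i₆)}` vanishes. -/
theorem gamma_all_vanish_of_degenerate (x : Fin 6 → Fin 3 → K) (hx : ∀ i, x i ≠ 0)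
    (φ : (Fin 3 → K) →ₗ[K] K) (hφ : φ ≠ 0)
    (honline : ∀ i : Fin 6, i ≤ 3 → φ (x i) = 0)
    (hoffline : φ (x 4) ≠ 0 ∧ φ (x 5) ≠ 0)
    (hdist : ∀ i j : Fin 6, i ≤ 3 → j ≤ 3 → i ≠ j → ∀ c : K, x j ≠ c • x i) :
    minor3 x 0 1 4 ^ 3 * minor3 x 2 3 5 ^ 3 ≠ 0 ∧
    ∀ π : Equiv.Perm (Fin 6),
      gammaTriple x (π 0) (π 1) (π 2) (π 3) (π 4) (π 5) = 0 ∧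
      gammaPair x (π 0) (π 1) (π 2) (π 3) (π 4) (π 5) = 0 := by
  have hpair (i j : Fin 6) (hi : i ≤ 3) (hj : j ≤ 3) (hij : i ≠ j) :
      LinearIndependent K ![x i, x j] :=
    (LinearIndependent.pair_iff' (hx i)).2 fun c => (hdist i j hi hj hij c).symm
  have hm₁ : minor3 x 0 1 4 ≠ 0 := minor3_ne_zero_of_apply_ne_zero
    (hpair 0 1 (by decide) (by decide) (by decide)) (honline 0 (by decide))
    (honline 1 (by decide)) hoffline.1
  have hm₂ : minor3 x 2 3 5 ≠ 0 := minor3_ne_zero_of_apply_ne_zero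
    (hpair 2 3 (by decide) (by decide) (by decide)) (honline 2 (by decide))
    (honline 3 (by decide)) hoffline.2
  obtain ⟨ψ, hψ, hψx⟩ :=
    exists_ne_zero_forall_apply_eq_zero_of_lt_finrank (F := K) ![x 4, x 5] (by simp)
  have hconic (i : Fin 6) : φ (x i) * ψ (x i) = 0 := by
    by_cases hi : i ≤ 3
    · rw [honline i hi, zero_mul]
    · obtain rfl | rfl : i = 4 ∨ i = 5 := by omega
      exacts [mul_eq_zero_of_right _ (hψx 0), mul_eq_zero_of_right _ (hψx 1)]
  refine ⟨mul_ne_zero (pow_ne_zero _ hm₁) (pow_ne_zero _ hm₂), fun π => ⟨?_, ?_⟩⟩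
  · rw [gammaTriple, dTwo_eq_zero_of_forall_mul_apply_eq_zero hφ hψ hconic, mul_zero]
  · exact gammaPair_perm_eq_zero (· ≤ 3) 4 5 (by decide)
      (fun i j k hi hj hk =>
        minor3_eq_zero_of_apply_eq_zero hφ (honline i hi) (honline j hj) (honline k hk)) π
end
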